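/- arXiv:1810.03547 — 5 statements merged into one kernel-verified Lean document; each statement's English description precedes it below -/
import Mathlib

section
/- Let {B_ν}_{ν∈ℕ} be a sequence of nonempty compact convex sets in ℝⁿ converging in Hausdorff distance to a nonempty compact convex set B. Then for every extreme point x of B there exists a sequence {x_ν}_{ν∈ℕ} with each x_ν an extreme point of B_ν such that x_ν converges to x. -/
/-!
Near an extreme point `x` of the limit `B`, the sets `B ν` eventually have extreme points close
to `x`: otherwise `B ν` would be the convex hull of its points far from `x`, and these lie close to
the compact set `K` of points of `B` far from `x`. Then `x`, which is close to `B ν`, would be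
close to the convex hull of `K`. But that hull is compact, contained in `B`, and its extreme points
lie in `K`, so it misses the extreme point `x` and hence stays at a positive distance from it.
-/

open Set Filter Metric Topology

section ConvexHull

variable {E : Type*} [NormedAddCommGroup E] [NormedSpace ℝ E]

theorem convexHull_eq_biUnion_image_stdSimplex [FiniteDimensional ℝ E] (s : Set E) :
    convexHull ℝ s = ⋃ m ∈ Finset.range (Module.finrank ℝ E + 2),
      (fun q : (Fin m → ℝ) × (Fin m → E) => ∑ i, q.1 i • q.2 i) ''
        (stdSimplex ℝ (Fin m) ×ˢ univ.pi fun _ => s) := by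
  apply Subset.antisymm
  · intro x hx
    -- Carathéodory: `x` is a combination of affinely independent points, so of few of them.
    obtain ⟨ι, _, z, w, hzs, hz, hw0, hw1, rfl⟩ := eq_pos_convex_span_of_mem_convexHull hx
    have hcard : Fintype.card ι < Module.finrank ℝ E + 2 :=
      Nat.lt_succ_of_le (hz.card_le_finrank_succ.trans (Nat.succ_le_succ (Submodule.finrank_le _)))
    let e := Fintype.equivFin ι
    refine mem_biUnion (Finset.mem_range.2 hcard)
      ⟨(w ∘ e.symm, z ∘ e.symm), ⟨⟨fun i => (hw0 _).le, ?_⟩, fun i _ => hzs (mem_range_self _)⟩, ?_⟩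
    · simpa only [Function.comp_apply] using (e.symm.sum_comp w).trans hw1
    · exact e.symm.sum_comp fun i => w i • z i
  · simp only [iUnion_subset_iff, image_subset_iff]
    rintro m - ⟨w, z⟩ ⟨⟨hw0, hw1⟩, hz⟩
    exact (convex_convexHull ℝ s).sum_mem (fun i _ => hw0 i) hw1
      fun i _ => subset_convexHull ℝ s (hz i (mem_univ i))

theorem isCompact_convexHull [FiniteDimensional ℝ E] {s : Set E} (hs : IsCompact s) :
    IsCompact (convexHull ℝ s) := by
  rw [convexHull_eq_biUnion_image_stdSimplex]
  exact Finset.isCompact_biUnion _ fun m _ =>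
    ((isCompact_stdSimplex _ _).prod (isCompact_univ_pi fun _ => hs)).image (by fun_prop)

theorem IsCompact.subset_convexHull_of_extremePoints_subset [FiniteDimensional ℝ E]
    {s t : Set E} (hs : IsCompact s) (hsc : Convex ℝ s) (ht : IsCompact t)
    (hst : s.extremePoints ℝ ⊆ t) : s ⊆ convexHull ℝ t := by
  rw [← closure_convexHull_extremePoints hs hsc, ← (isCompact_convexHull ht).isClosed.closure_eq]
  exact closure_mono (convexHull_mono hst)

theorem convexHull_thickening_subset (δ : ℝ) (s : Set E) :
    convexHull ℝ (thickening δ s) ⊆ thickening δ (convexHull ℝ s) :=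
  convexHull_min (thickening_subset_of_subset δ (subset_convexHull ℝ s))
    ((convex_convexHull ℝ s).thickening δ)

end ConvexHull

theorem mem_of_mem_extremePoints_of_mem_convexHull {𝕜 E : Type*} [Field 𝕜] [LinearOrder 𝕜]
    [IsStrictOrderedRing 𝕜] [AddCommGroup E] [Module 𝕜 E] {A K : Set E} {x : E}
    (hx : x ∈ A.extremePoints 𝕜) (hA : Convex 𝕜 A) (hKA : K ⊆ A) (hxK : x ∈ convexHull 𝕜 K) :
    x ∈ K :=
  extremePoints_convexHull_subset
    (inter_extremePoints_subset_extremePoints_of_subset (convexHull_min hKA hA) ⟨hxK, hx⟩)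

theorem sdiff_ball_subset_thickening_sdiff_ball {α : Type*} [PseudoMetricSpace α] {s t : Set α}
    (x : α) (ε : ℝ) {δ : ℝ} (hfin : hausdorffEDist s t ≠ ⊤)
    (hst : hausdorffDist s t < δ) : s \ ball x ε ⊆ thickening δ (t \ ball x (ε - δ)) := by
  rintro z ⟨hzs, hzx⟩
  obtain ⟨y, hyt, hzy⟩ := exists_dist_lt_of_hausdorffDist_lt hzs hst hfin
  refine mem_thickening_iff.2 ⟨y, ⟨hyt, fun hyx => hzx ?_⟩, hzy⟩
  rw [mem_ball] at hyx ⊢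
  linarith [dist_triangle z y x]

theorem exists_seq_tendsto_of_tendsto_infDist {α : Type*} [PseudoMetricSpace α] {S : ℕ → Set α}
    {x : α} (hS : ∀ n, (S n).Nonempty) (h : Tendsto (fun n => infDist x (S n)) atTop (𝓝 0)) :
    ∃ u : ℕ → α, (∀ n, u n ∈ S n) ∧ Tendsto u atTop (𝓝 x) := by
  have hclose : ∀ n : ℕ, ∃ y ∈ S n, dist x y < infDist x (S n) + 1 / ((n : ℝ) + 1) := fun n =>
    (infDist_lt_iff (hS n)).1 (lt_add_of_pos_right _ Nat.one_div_pos_of_nat)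
  choose u hu hux using hclose
  refine ⟨u, hu, tendsto_iff_dist_tendsto_zero.2 ?_⟩
  refine squeeze_zero (fun _ => dist_nonneg) (fun n => (dist_comm (u n) x).trans_le (hux n).le) ?_
  simpa using h.add tendsto_one_div_add_atTop_nhds_zero_nat

theorem IsCompact.exists_pos_forall_exists_mem_extremePoints_dist_lt {E : Type*}
    [NormedAddCommGroup E] [NormedSpace ℝ E] [FiniteDimensional ℝ E] {t : Set E}
    (ht : IsCompact t) (htc : Convex ℝ t) {x : E} (hx : x ∈ t.extremePoints ℝ) {ε : ℝ}
    (hε : 0 < ε) :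
    ∃ δ > 0, ∀ s : Set E, IsCompact s → Convex ℝ s → hausdorffEDist s t ≠ ⊤ →
      hausdorffDist s t < δ → ∃ y ∈ s.extremePoints ℝ, dist x y < ε := by
  set K := t \ ball x (ε / 2)
  have hxK : x ∉ convexHull ℝ K := fun h =>
    (mem_of_mem_extremePoints_of_mem_convexHull hx htc sdiff_subset h).2
      (mem_ball_self (half_pos hε))
  obtain ⟨r, hr, hball⟩ :=
    isOpen_iff.1 (isCompact_convexHull (ht.diff isOpen_ball)).isClosed.isOpen_compl x hxK
  refine ⟨min (ε / 2) (r / 2), by positivity, fun s hs hsc hfin hst => ?_⟩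
  set δ := min (ε / 2) (r / 2)
  by_contra! hfar
  have hsK : s \ ball x ε ⊆ thickening δ K :=
    (sdiff_ball_subset_thickening_sdiff_ball x ε hfin hst).trans <| thickening_subset_of_subset _ <|
      sdiff_subset_sdiff_right (ball_subset_ball (by linarith [min_le_left (ε / 2) (r / 2)]))
  have hext : s.extremePoints ℝ ⊆ s \ ball x ε := fun y hy =>
    ⟨hy.1, fun hyx => (hfar y hy).not_gt (by rwa [mem_ball, dist_comm] at hyx)⟩
  have hsub : s ⊆ thickening δ (convexHull ℝ K) :=
    calc s ⊆ convexHull ℝ (s \ ball x ε) :=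
          hs.subset_convexHull_of_extremePoints_subset hsc (hs.diff isOpen_ball) hext
      _ ⊆ convexHull ℝ (thickening δ K) := convexHull_mono hsK
      _ ⊆ thickening δ (convexHull ℝ K) := convexHull_thickening_subset δ K
  obtain ⟨z, hzs, hzx⟩ := exists_dist_lt_of_hausdorffDist_lt' hx.1 hst hfin
  obtain ⟨y, hyK, hzy⟩ := mem_thickening_iff.1 (hsub hzs)
  refine hball ?_ hyK
  rw [mem_ball, dist_comm]
  linarith [dist_triangle x z y, dist_comm z x, min_le_right (ε / 2) (r / 2)]

theorem extreme_point_limit_of_hausdorff_tendsto_general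
    (n : ℕ) (B : ℕ → Set (EuclideanSpace ℝ (Fin n)))
    (Blim : Set (EuclideanSpace ℝ (Fin n)))
    (hBne : ∀ ν, (B ν).Nonempty) (hBcpt : ∀ ν, IsCompact (B ν))
    (hBcvx : ∀ ν, Convex ℝ (B ν))
    (hlcpt : IsCompact Blim) (hlcvx : Convex ℝ Blim)
    (hconv : Filter.Tendsto (fun ν => Metric.hausdorffDist (B ν) Blim)
      Filter.atTop (nhds 0))
    (x : EuclideanSpace ℝ (Fin n)) (hx : x ∈ Set.extremePoints ℝ Blim) :
    ∃ xs : ℕ → EuclideanSpace ℝ (Fin n),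
      (∀ ν, xs ν ∈ Set.extremePoints ℝ (B ν)) ∧
      Filter.Tendsto xs Filter.atTop (nhds x) := by
  refine exists_seq_tendsto_of_tendsto_infDist
    (fun ν => (hBcpt ν).extremePoints_nonempty (hBne ν)) (tendsto_order.2 ⟨fun a ha =>
      Eventually.of_forall fun ν => ha.trans_le infDist_nonneg, fun ε hε => ?_⟩)
  obtain ⟨δ, hδ, hext⟩ := hlcpt.exists_pos_forall_exists_mem_extremePoints_dist_lt hlcvx hx hε
  filter_upwards [(tendsto_order.1 hconv).2 δ hδ] with ν hν
  have hfin := hausdorffEDist_ne_top_of_nonempty_of_bounded (hBne ν) ⟨x, hx.1⟩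
    (hBcpt ν).isBounded hlcpt.isBounded
  obtain ⟨y, hy, hxy⟩ := hext (B ν) (hBcpt ν) (hBcvx ν) hfin hν
  exact (infDist_le_dist_of_mem hy).trans_lt hxy

/-- If a sequence of nonempty compact convex sets `B ν` in `ℝⁿ` converges
in Hausdorff distance to a nonempty compact convex set `Blim`, then every extreme point of
`Blim` is the limit of a sequence of extreme points of the `B ν`. -/
theorem extreme_point_limit_of_hausdorff_tendsto
    (n : ℕ) (B : ℕ → Set (EuclideanSpace ℝ (Fin n)))
    (Blim : Set (EuclideanSpace ℝ (Fin n)))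
    (hBne : ∀ ν, (B ν).Nonempty) (hBcpt : ∀ ν, IsCompact (B ν))
    (hBcvx : ∀ ν, Convex ℝ (B ν))
    (hlne : Blim.Nonempty) (hlcpt : IsCompact Blim) (hlcvx : Convex ℝ Blim)
    (hconv : Filter.Tendsto (fun ν => Metric.hausdorffDist (B ν) Blim)
      Filter.atTop (nhds 0))
    (x : EuclideanSpace ℝ (Fin n)) (hx : x ∈ Set.extremePoints ℝ Blim) :
    ∃ xs : ℕ → EuclideanSpace ℝ (Fin n),
      (∀ ν, xs ν ∈ Set.extremePoints ℝ (B ν)) ∧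
      Filter.Tendsto xs Filter.atTop (nhds x) :=
  extreme_point_limit_of_hausdorff_tendsto_general n B Blim hBne hBcpt hBcvx hlcpt hlcvx hconv x hx
end

section
/- Let 𝒞 be a compact subset of ℝⁿ with C = conv(𝒞) satisfying hypotheses (H1), (H2), (H3). Let ε_ν ↘ 0, let 𝒜_{ε_ν} ⊆ 𝒞 be ε_ν-approximations of 𝒞 and A_{ε_ν} = conv(𝒜_{ε_ν}). If {F_{ε_ν}} is a sequence of nonempty proper exposed faces of the polytopes A_{ε_ν} converging in Hausdorff distance to a set F, then F is a proper face of C (a nonempty convex extreme subset of C different from C). -/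
/-!
Normalize the functionals exposing `F ν` to unit vectors `w ν` in the direction space of `C`
and pass to a subsequence `w ν → w₀`. By the density of `𝒜 ν`, the vertices of `F ν` eventually
lie near the set `S` of maximizers of `⟪w₀, ·⟫` on `𝒞`, which is finite by (H3); being also near
`Flim`, they lie near `S ∩ Flim`, so `Flim = conv (S ∩ Flim)`. The face `conv S` of `C` exposed
by `w₀` lies in the boundary of `C`, so `S` consists of extreme points (H1) and is contained in
the vertex set of the simplex `conv S` (H2). Hence `Flim` is a face of a face of `C`, and it is proper
because `⟪w₀, ·⟫` is not constant on `C`.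
-/

open Set Filter Metric Topology
open scoped RealInnerProductSpace

section Convexity

variable {E : Type*} [AddCommGroup E] [Module ℝ E]

theorem mem_convexHull_inter_of_le_of_eq {P : Set E} (l : E →ₗ[ℝ] ℝ) {m : ℝ}
    (hP : ∀ p ∈ P, l p ≤ m) {x : E} (hx : x ∈ convexHull ℝ P) (hxm : l x = m) :
    x ∈ convexHull ℝ (P ∩ {y | l y = m}) := by
  let D : Set E := {z | l z ≤ m ∧ (l z = m → z ∈ convexHull ℝ (P ∩ {y | l y = m}))}
  suffices convexHull ℝ P ⊆ D from (this hx).2 hxm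
  refine convexHull_min (fun p hp => ⟨hP p hp, fun hpm => subset_convexHull ℝ _ ⟨hp, hpm⟩⟩) ?_
  rintro u ⟨hu, hu'⟩ v ⟨hv, hv'⟩ a b ha hb hab
  obtain rfl : b = 1 - a := by linarith
  simp only [D, mem_ofPred_eq, map_add, map_smul, smul_eq_mul]
  refine ⟨by nlinarith, fun h => ?_⟩
  obtain rfl | ha' := ha.eq_or_lt
  · simpa using hv' (by simpa using h)
  obtain hb' | hb0 := hb.lt_or_eq
  · have hum : l u = m := by nlinarith
    have hvm : l v = m := by nlinarith
    exact convex_convexHull ℝ _ (hu' hum) (hv' hvm) ha hb (by ring)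
  · obtain rfl : a = 1 := by linarith
    simpa using hu' (by simpa using h)

theorem ContinuousLinearMap.toExposed_convexHull [TopologicalSpace E] (l : StrongDual ℝ E)
    (P : Set E) : l.toExposed (convexHull ℝ P) = convexHull ℝ (l.toExposed P) := by
  refine Subset.antisymm (fun x ⟨hx, hmax⟩ => ?_) (convexHull_min ?_ ?_)
  · refine convexHull_mono ?_ (mem_convexHull_inter_of_le_of_eq l.toLinearMap
      (fun p hp => hmax p (subset_convexHull ℝ P hp)) hx rfl)
    exact fun p ⟨hp, hpx⟩ => ⟨hp, fun y hy => (hmax y (subset_convexHull ℝ P hy)).trans_eq hpx.symm⟩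
  · refine fun p ⟨hp, hmax⟩ => ⟨subset_convexHull ℝ P hp, fun y hy => ?_⟩
    exact convexHull_min hmax (convex_halfSpace_le l.isLinear (l p)) hy
  · exact ContinuousLinearMap.toExposed.isExposed.convex (convex_convexHull ℝ P)

theorem ContinuousLinearMap.apply_eq_of_mem_toExposed [TopologicalSpace E] {l : StrongDual ℝ E}
    {A : Set E} {x y : E} (hx : x ∈ l.toExposed A) (hy : y ∈ l.toExposed A) : l x = l y :=
  le_antisymm (hy.2 x hx.1) (hx.2 y hy.1)

theorem ContinuousLinearMap.finite_toExposed [TopologicalSpace E] {l : StrongDual ℝ E}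
    {A : Set E} (hA : ∀ c, (A ∩ {x | l x = c}).Finite) : (l.toExposed A).Finite := by
  rcases (l.toExposed A).eq_empty_or_nonempty with hempty | ⟨x₀, hx₀⟩
  · exact hempty ▸ finite_empty
  · exact (hA (l x₀)).subset fun x hx => ⟨hx.1, l.apply_eq_of_mem_toExposed hx hx₀⟩

theorem AffineIndependent.isExtreme_convexHull_of_subset {s : Finset E} {t : Set E}
    (hs : AffineIndependent ℝ ((↑) : s → E)) (hts : t ⊆ s) :
    IsExtreme ℝ (convexHull ℝ (s : Set E)) (convexHull ℝ t) := by
  obtain ⟨t, rfl⟩ := (s.finite_toSet.subset hts).exists_finset_coe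
  replace hts := Finset.coe_subset.1 hts
  classical
  refine ⟨convexHull_mono (Finset.coe_subset.2 hts), ?_⟩
  rintro x₁ hx₁ x₂ hx₂ z hz ⟨a, b, ha, hb, hab, rfl⟩
  rw [Finset.mem_convexHull'] at hx₁ hx₂ hz
  obtain ⟨w₁, hw₁₀, hw₁₁, rfl⟩ := hx₁
  obtain ⟨w₂, hw₂₀, hw₂₁, rfl⟩ := hx₂
  obtain ⟨w, -, hw₁, hwz⟩ := hz
  -- `a • w₁ + b • w₂` and `w` are barycentric coordinates of the same point
  have hcoord := hs.eq_zero_of_sum_eq_zero_subtype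
    (w := fun y => a * w₁ y + b * w₂ y - if y ∈ t then w y else 0) ?_ ?_
  · have hw₁t : ∀ y ∈ s, y ∉ t → w₁ y = 0 := fun y hy hyt => by
      have := hcoord y hy
      simp only [hyt, if_false, sub_zero] at this
      nlinarith [hw₁₀ y hy, hw₂₀ y hy]
    rw [Finset.mem_convexHull']
    refine ⟨w₁, fun y hy => hw₁₀ y (hts hy), ?_, ?_⟩
    · rwa [Finset.sum_subset hts fun y hy hyt => hw₁t y hy hyt]
    · rw [Finset.sum_subset hts fun y hy hyt => by simp [hw₁t y hy hyt]]
  · simp only [Finset.sum_sub_distrib, Finset.sum_add_distrib, ← Finset.mul_sum, hw₁₁, hw₂₁,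
      ← Finset.sum_filter, Finset.filter_mem_eq_inter, Finset.inter_eq_right.2 hts, hw₁]
    linarith
  · simp only [sub_smul, add_smul, mul_smul, ite_smul, zero_smul, Finset.sum_sub_distrib,
      Finset.sum_add_distrib, ← Finset.smul_sum, ← Finset.sum_filter, Finset.filter_mem_eq_inter,
      Finset.inter_eq_right.2 hts, hwz, sub_self]

end Convexity

section Normed

variable {E : Type*} [NormedAddCommGroup E] [NormedSpace ℝ E]

theorem ContinuousLinearMap.toExposed_subset_frontier {l : StrongDual ℝ E} (hl : l ≠ 0)
    (A : Set E) : l.toExposed A ⊆ frontier A := by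
  refine fun x ⟨hxA, hmax⟩ => ⟨subset_closure hxA, fun hint => hl ?_⟩
  have hloc : IsLocalMax l x :=
    IsMaxOn.isLocalMax (fun y hy => hmax y hy) (mem_interior_iff_mem_nhds.1 hint)
  simpa using hloc.fderiv_eq_zero

theorem isExtreme_convexHull_of_subset_toExposed {𝒞 C T : Set E} (hC : C = convexHull ℝ 𝒞)
    (H1 : ∀ x ∈ 𝒞, x ∈ frontier C → x ∈ Set.extremePoints ℝ C)
    (H2 : ∀ G : Set E, IsExtreme ℝ C G → (∃ V : Set E, V.Finite ∧ G = convexHull ℝ V) →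
      ∃ V : Set E, V.Finite ∧ AffineIndependent ℝ ((↑) : V → E) ∧ G = convexHull ℝ V)
    {l : StrongDual ℝ E} (hl : l ≠ 0) (hS : (l.toExposed 𝒞).Finite) (hT : T ⊆ l.toExposed 𝒞) :
    IsExtreme ℝ C (convexHull ℝ T) := by
  subst hC
  set G := l.toExposed (convexHull ℝ 𝒞)
  have hG : IsExtreme ℝ (convexHull ℝ 𝒞) G := ContinuousLinearMap.toExposed.isExposed.isExtreme
  have hGS : G = convexHull ℝ (l.toExposed 𝒞) := l.toExposed_convexHull 𝒞
  obtain ⟨V, hV, hVind, hGV⟩ := H2 G hG ⟨_, hS, hGS⟩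
  have hSV : l.toExposed 𝒞 ⊆ V := fun s hs => by
    have hsG : s ∈ G := hGS ▸ subset_convexHull ℝ _ hs
    have hsC := H1 s hs.1 (l.toExposed_subset_frontier hl _ hsG)
    have hsV : s ∈ (convexHull ℝ V).extremePoints ℝ :=
      hGV ▸ inter_extremePoints_subset_extremePoints_of_subset hG.subset ⟨hsG, hsC⟩
    exact extremePoints_convexHull_subset hsV
  obtain ⟨V, rfl⟩ := hV.exists_finset_coe
  exact hG.trans (hGV ▸ hVind.isExtreme_convexHull_of_subset (hT.trans hSV))

end Normed

section Hausdorff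

variable {X : Type*} [PseudoMetricSpace X] {ι : Type*} {l : Filter ι}

theorem Metric.subset_cthickening_hausdorffDist {s t : Set X} (h : hausdorffEDist s t ≠ ⊤) :
    s ⊆ cthickening (hausdorffDist s t) t := fun _ hx => mem_cthickening_iff.2 <| by
  rw [hausdorffDist, ENNReal.ofReal_toReal h]
  exact infEDist_le_hausdorffEDist_of_mem hx

theorem Metric.subset_cthickening_hausdorffDist' {s t : Set X} (h : hausdorffEDist s t ≠ ⊤) :
    t ⊆ cthickening (hausdorffDist s t) s := by
  rw [hausdorffDist_comm]
  exact subset_cthickening_hausdorffDist (by rwa [hausdorffEDist_comm])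

theorem Set.Finite.exists_pos_inter_thickening_subset {S L : Set X} (hS : S.Finite)
    (hL : IsClosed L) : ∃ δ > 0, S ∩ thickening δ L ⊆ L := by
  obtain ⟨δ, hδ, hdisj⟩ :=
    (disjoint_sdiff_left : Disjoint (S \ L) L).exists_thickenings (hS.sdiff).isCompact hL
  exact ⟨δ, hδ, fun s ⟨hsS, hsL⟩ => by_contra fun hs =>
    hdisj.ne_of_mem (self_subset_thickening hδ _ ⟨hsS, hs⟩) hsL rfl⟩

theorem IsCompact.exists_pos_forall_mem_thickening {K : Set X} (hK : IsCompact K) {g : X → ℝ}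
    (hg : ContinuousOn g K) {δ : ℝ} (hδ : 0 < δ) :
    ∃ η > 0, ∀ x ∈ K, (∀ y ∈ K, g y < g x + η) →
      x ∈ thickening δ {s ∈ K | ∀ y ∈ K, g y ≤ g s} := by
  set S := {s ∈ K | ∀ y ∈ K, g y ≤ g s}
  rcases (K \ thickening δ S).eq_empty_or_nonempty with hempty | hne
  · exact ⟨1, one_pos, fun x hx _ => by_contra fun hxS => hempty.subset ⟨hx, hxS⟩⟩
  obtain ⟨x₀, hx₀, hmax⟩ := (hK.diff isOpen_thickening).exists_isMaxOn hne (hg.mono sdiff_subset)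
  have hx₀S : x₀ ∉ S := fun h => hx₀.2 (self_subset_thickening hδ S h)
  simp only [S, mem_ofPred_eq, not_and, not_forall, not_le] at hx₀S
  obtain ⟨y₀, hy₀, hlt⟩ := hx₀S hx₀.1
  refine ⟨g y₀ - g x₀, sub_pos.2 hlt, fun x hx hnear => by_contra fun hxS => ?_⟩
  have h₁ : g x ≤ g x₀ := hmax ⟨hx, hxS⟩
  have h₂ := hnear y₀ hy₀
  linarith

theorem subset_closure_of_tendsto_hausdorffDist [l.NeBot] {F : ι → Set X} {L K : Set X}
    (hfin : ∀ i, hausdorffEDist (F i) L ≠ ⊤)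
    (hlim : Tendsto (fun i => hausdorffDist (F i) L) l (𝓝 0))
    (hK : ∀ δ > 0, ∀ᶠ i in l, F i ⊆ cthickening δ K) : L ⊆ closure K := by
  rw [closure_eq_iInter_cthickening]
  refine subset_iInter₂ fun δ hδ => ?_
  obtain ⟨i, hFi, hdi⟩ :=
    ((hK (δ / 2) (half_pos hδ)).and (hlim.eventually (eventually_le_nhds (half_pos hδ)))).exists
  set d := hausdorffDist (F i) L
  calc L ⊆ cthickening d (F i) := subset_cthickening_hausdorffDist' (hfin i)
    _ ⊆ cthickening d (cthickening (δ / 2) K) := cthickening_subset_of_subset _ hFi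
    _ ⊆ cthickening (d + δ / 2) K :=
        cthickening_cthickening_subset hausdorffDist_nonneg (half_pos hδ).le _
    _ ⊆ cthickening δ K := cthickening_mono (by linarith) _

end Hausdorff

section HausdorffConvex

variable {E : Type*} [NormedAddCommGroup E] [NormedSpace ℝ E] {ι : Type*} {l : Filter ι}
  [l.NeBot] {F : ι → Set E} {L : Set E}

theorem convex_of_tendsto_hausdorffDist (hF : ∀ i, Convex ℝ (F i)) (hL : IsClosed L)
    (hfin : ∀ i, hausdorffEDist (F i) L ≠ ⊤)
    (hlim : Tendsto (fun i => hausdorffDist (F i) L) l (𝓝 0)) : Convex ℝ L := by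
  refine convexHull_eq_self.1 ((subset_convexHull ℝ L).antisymm' (.trans ?_ hL.closure_subset))
  rw [closure_eq_iInter_cthickening]
  refine subset_iInter₂ fun δ hδ => ?_
  obtain ⟨i, hdi⟩ := (hlim.eventually (eventually_le_nhds (half_pos hδ))).exists
  set d := hausdorffDist (F i) L
  calc convexHull ℝ L ⊆ cthickening d (F i) :=
        convexHull_min (subset_cthickening_hausdorffDist' (hfin i)) ((hF i).cthickening d)
    _ ⊆ cthickening d (cthickening d L) :=
        cthickening_subset_of_subset _ (subset_cthickening_hausdorffDist (hfin i))
    _ ⊆ cthickening (d + d) L :=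
        cthickening_cthickening_subset hausdorffDist_nonneg hausdorffDist_nonneg _
    _ ⊆ cthickening δ L := cthickening_mono (by linarith) _

theorem eq_convexHull_inter_of_tendsto_hausdorffDist {B : ι → Set E} {S : Set E}
    (hS : S.Finite) (hL : IsClosed L) (hFB : ∀ i, F i = convexHull ℝ (B i))
    (hfin : ∀ i, hausdorffEDist (F i) L ≠ ⊤)
    (hlim : Tendsto (fun i => hausdorffDist (F i) L) l (𝓝 0))
    (hB : ∀ δ > 0, ∀ᶠ i in l, B i ⊆ thickening δ S) : L = convexHull ℝ (S ∩ L) := by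
  have hLconv : Convex ℝ L :=
    convex_of_tendsto_hausdorffDist (fun i => hFB i ▸ convex_convexHull ℝ _) hL hfin hlim
  refine Subset.antisymm ?_ (convexHull_min inter_subset_right hLconv)
  have hclosed : IsClosed (convexHull ℝ (S ∩ L)) :=
    (hS.subset inter_subset_left).isClosed_convexHull ℝ
  refine (subset_closure_of_tendsto_hausdorffDist hfin hlim fun δ hδ => ?_).trans
    hclosed.closure_subset
  obtain ⟨δ₀, hδ₀, hSL⟩ := hS.exists_pos_inter_thickening_subset hL
  obtain ⟨r, hr, hrδ, hrδ₀⟩ : ∃ r > 0, r ≤ δ ∧ r ≤ δ₀ / 2 :=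
    ⟨min δ (δ₀ / 2), by positivity, min_le_left _ _, min_le_right _ _⟩
  filter_upwards [hB r hr, hlim.eventually (eventually_lt_nhds hr)] with i hBi hdi
  -- a point of `S` near a point of `B i` is also near `L`, hence in `L`
  have hBSL : B i ⊆ thickening δ (S ∩ L) := fun b hb => by
    obtain ⟨s, hs, hbs⟩ := mem_thickening_iff.1 (hBi hb)
    obtain ⟨y, hy, hby⟩ :=
      exists_dist_lt_of_hausdorffDist_lt (hFB i ▸ subset_convexHull ℝ _ hb) hdi (hfin i)
    have hsy : dist s y < δ₀ := by
      linarith [dist_triangle_left s y b]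
    have hsL : s ∈ L := hSL ⟨hs, mem_thickening_iff.2 ⟨y, hy, hsy⟩⟩
    exact mem_thickening_iff.2 ⟨s, ⟨hs, hsL⟩, by linarith⟩
  refine (hFB i).subset.trans (convexHull_min ?_ ((convex_convexHull ℝ _).cthickening δ))
  exact hBSL.trans <| (thickening_subset_cthickening _ _).trans <|
    cthickening_subset_of_subset _ (subset_convexHull ℝ _)

end HausdorffConvex

section InnerProduct

variable {E : Type*} [NormedAddCommGroup E] [InnerProductSpace ℝ E]

theorem innerSL_toExposed_ne_self {s : Set E} {w : E} (hw : w ∈ vectorSpan ℝ s)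
    (hw0 : w ≠ 0) : (innerSL ℝ w).toExposed s ≠ s := fun hs => hw0 <| by
  have hker : vectorSpan ℝ s ≤ LinearMap.ker (innerₛₗ ℝ w) := by
    rw [vectorSpan_def, Submodule.span_le]
    rintro _ ⟨x, hx, y, hy, rfl⟩
    rw [← hs] at hx hy
    simpa [inner_sub_right, sub_eq_zero] using (innerSL ℝ w).apply_eq_of_mem_toExposed hx hy
  simpa using hker hw

theorem exists_mem_vectorSpan_toExposed_eq [FiniteDimensional ℝ E] {s A F : Set E}
    (hAs : A ⊆ s) (hF : IsExposed ℝ A F) (hFne : F.Nonempty) (hFA : F ≠ A) :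
    ∃ w : E, ‖w‖ = 1 ∧ w ∈ vectorSpan ℝ s ∧ F = (innerSL ℝ w).toExposed A := by
  obtain ⟨l, rfl⟩ := hF hFne
  set K := vectorSpan ℝ s
  set v : K := (InnerProductSpace.toDual ℝ K).symm (l.comp K.subtypeL)
  have hv : ∀ x ∈ s, ∀ y ∈ s, ⟪(v : E), x⟫ - ⟪(v : E), y⟫ = l x - l y := fun x hx y hy => by
    have := InnerProductSpace.toDual_symm_apply (𝕜 := ℝ) (E := K)
      (x := ⟨x - y, vsub_mem_vectorSpan ℝ hx hy⟩) (y := l.comp K.subtypeL)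
    rw [← inner_sub_right, ← map_sub]
    exact this
  have hv0 : (v : E) ≠ 0 := fun h0 => hFA <| Subset.antisymm (fun x hx => hx.1) fun x hx =>
    ⟨hx, fun y hy => by
      have hxy := hv x (hAs hx) y (hAs hy)
      rw [h0, inner_zero_left, inner_zero_left] at hxy
      linarith⟩
  refine ⟨‖(v : E)‖⁻¹ • (v : E), by simp [norm_smul, hv0], K.smul_mem _ v.2, ?_⟩
  ext x
  refine and_congr_right fun hx => forall₂_congr fun y hy => ?_
  simp only [innerSL_apply_apply, real_inner_smul_left]
  rw [mul_le_mul_iff_of_pos_left (by positivity)]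
  constructor <;> intro <;> linarith [hv x (hAs hx) y (hAs hy)]

theorem eventually_toExposed_subset_thickening {ι : Type*} {l : Filter ι} {𝒞 : Set E}
    (h𝒞 : IsCompact 𝒞) {𝒜 : ι → Set E} (h𝒜 : ∀ i, 𝒜 i ⊆ 𝒞) {ε : ι → ℝ}
    (hε : Tendsto ε l (𝓝 0)) (happrox : ∀ i, ∀ y ∈ 𝒞, ∃ x ∈ 𝒜 i, ‖y - x‖ ≤ ε i)
    {w : ι → E} {w₀ : E} (hw : Tendsto w l (𝓝 w₀)) {δ : ℝ} (hδ : 0 < δ) :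
    ∀ᶠ i in l, (innerSL ℝ (w i)).toExposed (𝒜 i) ⊆
      thickening δ ((innerSL ℝ w₀).toExposed 𝒞) := by
  obtain ⟨η, hη, hnear⟩ :=
    h𝒞.exists_pos_forall_mem_thickening (innerSL ℝ w₀).continuous.continuousOn hδ
  have herr : Tendsto (fun i => ‖w₀‖ * ε i + ‖w i - w₀‖ * diam 𝒞) l (𝓝 0) := by
    simpa using (hε.const_mul ‖w₀‖).add
      ((tendsto_iff_norm_sub_tendsto_zero.1 hw).mul_const (diam 𝒞))
  filter_upwards [herr.eventually (eventually_lt_nhds hη)] with i hi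
  rintro b ⟨hb, hbmax⟩
  refine hnear b (h𝒜 i hb) fun y hy => ?_
  obtain ⟨a, ha, hya⟩ := happrox i y hy
  have hy_a : ⟪w₀, y⟫ ≤ ⟪w₀, a⟫ + ‖w₀‖ * ε i := by
    have := real_inner_le_norm w₀ (y - a)
    rw [inner_sub_right] at this
    nlinarith [norm_nonneg w₀]
  have ha_b : ⟪w₀, a⟫ ≤ ⟪w₀, b⟫ + ‖w i - w₀‖ * diam 𝒞 := by
    have hab : ⟪w i, a⟫ ≤ ⟪w i, b⟫ := hbmax a ha
    have hdiff := real_inner_le_norm (w₀ - w i) (a - b)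
    have hdiam : dist a b ≤ diam 𝒞 := dist_le_diam_of_mem h𝒞.isBounded (h𝒜 i ha) (h𝒜 i hb)
    rw [inner_sub_left, inner_sub_right, inner_sub_right, ← dist_eq_norm a b,
      norm_sub_rev] at hdiff
    nlinarith [mul_le_mul_of_nonneg_left hdiam (norm_nonneg (w i - w₀))]
  simp only [innerSL_apply_apply]
  linarith

end InnerProduct

theorem hausdorff_limit_of_exposed_faces_is_proper_face_general
    (n : ℕ) (𝒞 : Set (EuclideanSpace ℝ (Fin n))) (h𝒞 : IsCompact 𝒞)
    (C : Set (EuclideanSpace ℝ (Fin n))) (hC : C = convexHull ℝ 𝒞)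
    -- (H1): every curve point on the boundary of `C` is an extreme point of `C`
    (H1 : ∀ x ∈ 𝒞, x ∈ frontier C → x ∈ Set.extremePoints ℝ C)
    -- (H2): every face of `C` that is a polytope is a simplex
    (H2 : ∀ G : Set (EuclideanSpace ℝ (Fin n)), IsExtreme ℝ C G →
      (∃ V : Set (EuclideanSpace ℝ (Fin n)), V.Finite ∧ G = convexHull ℝ V) →
      ∃ V : Set (EuclideanSpace ℝ (Fin n)), V.Finite ∧
        AffineIndependent ℝ ((↑) : V → EuclideanSpace ℝ (Fin n)) ∧ G = convexHull ℝ V)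
    -- (H3): every hyperplane meets `𝒞` in a finite set
    (H3 : ∀ (l : EuclideanSpace ℝ (Fin n) →L[ℝ] ℝ) (c : ℝ), l ≠ 0 →
      (𝒞 ∩ {x | l x = c}).Finite)
    (ε : ℕ → ℝ)
    (hεlim : Filter.Tendsto ε Filter.atTop (nhds 0))
    (𝒜 : ℕ → Set (EuclideanSpace ℝ (Fin n)))
    (h𝒜sub : ∀ ν, 𝒜 ν ⊆ 𝒞)
    (h𝒜approx : ∀ ν, ∀ y ∈ 𝒞, ∃ x ∈ 𝒜 ν, ‖y - x‖ ≤ ε ν)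
    (A : ℕ → Set (EuclideanSpace ℝ (Fin n)))
    (hA : ∀ ν, A ν = convexHull ℝ (𝒜 ν))
    (F : ℕ → Set (EuclideanSpace ℝ (Fin n)))
    (hFne : ∀ ν, (F ν).Nonempty)
    (hFexp : ∀ ν, IsExposed ℝ (A ν) (F ν))
    (hFprop : ∀ ν, F ν ≠ A ν)
    (Flim : Set (EuclideanSpace ℝ (Fin n)))
    (hFlne : Flim.Nonempty) (hFlcpt : IsCompact Flim)
    (hFconv : Filter.Tendsto (fun ν => Metric.hausdorffDist (F ν) Flim)
      Filter.atTop (nhds 0)) :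
    Flim.Nonempty ∧ IsExtreme ℝ C Flim ∧ Flim ≠ C := by
  have hCbdd : Bornology.IsBounded C := hC ▸ isBounded_convexHull.2 h𝒞.isBounded
  have hAC : ∀ ν, A ν ⊆ C := fun ν => hA ν ▸ hC ▸ convexHull_mono (h𝒜sub ν)
  choose w hw hwC hwF using fun ν =>
    exists_mem_vectorSpan_toExposed_eq (hAC ν) (hFexp ν) (hFne ν) (hFprop ν)
  obtain ⟨w₀, hw₀, φ, hφ, hwφ⟩ := (isCompact_sphere 0 1).tendsto_subseq
    fun ν => mem_sphere_zero_iff_norm.2 (hw ν)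
  have hw₀C : w₀ ∈ vectorSpan ℝ C := (Submodule.closed_of_finiteDimensional _).mem_of_tendsto
    hwφ (.of_forall fun k => hwC (φ k))
  have hw₀0 : w₀ ≠ 0 := ne_of_mem_sphere hw₀ one_ne_zero
  have hl : innerSL ℝ w₀ ≠ 0 := by
    rw [← norm_ne_zero_iff, innerSL_apply_norm, norm_ne_zero_iff]; exact hw₀0
  set S := (innerSL ℝ w₀).toExposed 𝒞
  have hS : S.Finite := ContinuousLinearMap.finite_toExposed fun c => H3 _ c hl
  have hFB : ∀ ν, F ν = convexHull ℝ ((innerSL ℝ (w ν)).toExposed (𝒜 ν)) := fun ν => by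
    rw [hwF ν, hA ν, ContinuousLinearMap.toExposed_convexHull]
  have hfin : ∀ ν, hausdorffEDist (F ν) Flim ≠ ⊤ := fun ν =>
    hausdorffEDist_ne_top_of_nonempty_of_bounded (hFne ν) hFlne
      (hCbdd.subset ((hFexp ν).subset.trans (hAC ν))) hFlcpt.isBounded
  have hFlS : Flim = convexHull ℝ (S ∩ Flim) :=
    eq_convexHull_inter_of_tendsto_hausdorffDist hS hFlcpt.isClosed (fun k => hFB (φ k))
      (fun k => hfin (φ k)) (hFconv.comp hφ.tendsto_atTop) fun _ hδ =>
        eventually_toExposed_subset_thickening h𝒞 (fun k => h𝒜sub (φ k))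
          (hεlim.comp hφ.tendsto_atTop) (fun k => h𝒜approx (φ k)) hwφ hδ
  have hFlG : Flim ⊆ (innerSL ℝ w₀).toExposed C := by
    rw [hFlS, hC, ContinuousLinearMap.toExposed_convexHull]
    exact convexHull_mono inter_subset_left
  refine ⟨hFlne, hFlS ▸ isExtreme_convexHull_of_subset_toExposed hC H1 H2 hl hS
    inter_subset_left, fun hFlC => innerSL_toExposed_ne_self hw₀C hw₀0 ?_⟩
  exact ContinuousLinearMap.toExposed.isExposed.subset.antisymm (hFlC ▸ hFlG)

/-- Let `𝒞` be compact in `ℝⁿ` with `C = conv 𝒞` satisfying (H1), (H2),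
(H3).  Let `ε ν ↘ 0`, `𝒜 ν ⊆ 𝒞` be `ε ν`-approximations and `A ν = conv (𝒜 ν)`.  If a
sequence of nonempty proper exposed faces `F ν` of the polytopes `A ν` converges in
Hausdorff distance to a set `Flim`, then `Flim` is a proper face of `C`, i.e. a nonempty
convex extreme subset of `C` different from `C`. -/
theorem hausdorff_limit_of_exposed_faces_is_proper_face
    (n : ℕ) (𝒞 : Set (EuclideanSpace ℝ (Fin n))) (h𝒞 : IsCompact 𝒞)
    (C : Set (EuclideanSpace ℝ (Fin n))) (hC : C = convexHull ℝ 𝒞)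
    -- (H1): every curve point on the boundary of `C` is an extreme point of `C`
    (H1 : ∀ x ∈ 𝒞, x ∈ frontier C → x ∈ Set.extremePoints ℝ C)
    -- (H2): every face of `C` that is a polytope is a simplex
    (H2 : ∀ G : Set (EuclideanSpace ℝ (Fin n)), IsExtreme ℝ C G →
      (∃ V : Set (EuclideanSpace ℝ (Fin n)), V.Finite ∧ G = convexHull ℝ V) →
      ∃ V : Set (EuclideanSpace ℝ (Fin n)), V.Finite ∧
        AffineIndependent ℝ ((↑) : V → EuclideanSpace ℝ (Fin n)) ∧ G = convexHull ℝ V)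
    -- (H3): every hyperplane meets `𝒞` in a finite set
    (H3 : ∀ (l : EuclideanSpace ℝ (Fin n) →L[ℝ] ℝ) (c : ℝ), l ≠ 0 →
      (𝒞 ∩ {x | l x = c}).Finite)
    (ε : ℕ → ℝ) (hεpos : ∀ ν, 0 < ε ν) (hεanti : StrictAnti ε)
    (hεlim : Filter.Tendsto ε Filter.atTop (nhds 0))
    (𝒜 : ℕ → Set (EuclideanSpace ℝ (Fin n)))
    (h𝒜fin : ∀ ν, (𝒜 ν).Finite) (h𝒜sub : ∀ ν, 𝒜 ν ⊆ 𝒞)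
    (h𝒜approx : ∀ ν, ∀ y ∈ 𝒞, ∃ x ∈ 𝒜 ν, ‖y - x‖ ≤ ε ν)
    (A : ℕ → Set (EuclideanSpace ℝ (Fin n)))
    (hA : ∀ ν, A ν = convexHull ℝ (𝒜 ν))
    (F : ℕ → Set (EuclideanSpace ℝ (Fin n)))
    (hFne : ∀ ν, (F ν).Nonempty)
    (hFexp : ∀ ν, IsExposed ℝ (A ν) (F ν))
    (hFprop : ∀ ν, F ν ≠ A ν)
    (Flim : Set (EuclideanSpace ℝ (Fin n)))
    (hFlne : Flim.Nonempty) (hFlcpt : IsCompact Flim)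
    (hFconv : Filter.Tendsto (fun ν => Metric.hausdorffDist (F ν) Flim)
      Filter.atTop (nhds 0)) :
    Flim.Nonempty ∧ IsExtreme ℝ C Flim ∧ Flim ≠ C :=
  hausdorff_limit_of_exposed_faces_is_proper_face_general n 𝒞 h𝒞 C hC H1 H2 H3 ε hεlim 𝒜 h𝒜sub
    h𝒜approx A hA F hFne hFexp hFprop Flim hFlne hFlcpt hFconv
end

section
/- Let 𝒞 be a compact subset of ℝⁿ with C = conv(𝒞) satisfying hypothesis (H1). Let F be a uniquely exposed face of C with extreme points v₀,…,v_k whose barycenter is the origin, exposed by the halfspace {x : hᵀx ≥ 0} with ‖h‖ = 1 (so hᵀx ≥ 0 on C and F = C ∩ {x : hᵀx = 0}). Then for every δ > 0 there exists γ > 0 such that every y ∈ 𝒞 with hᵀy < γ satisfies ‖y − v_i‖ < δ for some i ∈ {0,1,…,k}. -/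
open RealInnerProductSpace

/-- Let `𝒞` be compact in `ℝⁿ` with `C = conv 𝒞` satisfying (H1).  Let
`F` be a uniquely exposed face of `C` with extreme points `v 0, …, v k` whose barycenter
is the origin, exposed by the halfspace `{x : ⟪h,x⟫ ≥ 0}` with `‖h‖ = 1`.  Then for every
`δ > 0` there is `γ > 0` such that every `y ∈ 𝒞` with `⟪h,y⟫ < γ` lies within distance
`δ` of some `v i`. -/
theorem curve_points_below_threshold_near_vertices
    (n k : ℕ) (𝒞 : Set (EuclideanSpace ℝ (Fin n))) (h𝒞 : IsCompact 𝒞)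
    (C : Set (EuclideanSpace ℝ (Fin n))) (hC : C = convexHull ℝ 𝒞)
    -- (H1): every curve point on the boundary of `C` is an extreme point of `C`
    (H1 : ∀ x ∈ 𝒞, x ∈ frontier C → x ∈ Set.extremePoints ℝ C)
    (F : Set (EuclideanSpace ℝ (Fin n))) (hFface : IsExtreme ℝ C F)
    (v : Fin (k + 1) → EuclideanSpace ℝ (Fin n))
    (hv : Set.extremePoints ℝ F = Set.range v)
    -- the barycenter of the extreme points of `F` is the origin
    (hbary : ∑ i, v i = 0)
    (h : EuclideanSpace ℝ (Fin n)) (hnorm : ‖h‖ = 1)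
    (hpos : ∀ x ∈ C, 0 ≤ ⟪h, x⟫)
    (hF : F = {x ∈ C | ⟪h, x⟫ = 0})
    -- `F` is uniquely exposed: `(h, 0)` is the only exposing pair
    (huniq : ∀ (h' : EuclideanSpace ℝ (Fin n)) (γ' : ℝ), ‖h'‖ = 1 →
      (∀ x ∈ C, γ' ≤ ⟪h', x⟫) → F = {x ∈ C | ⟪h', x⟫ = γ'} → h' = h ∧ γ' = 0)
    (δ : ℝ) (hδ : 0 < δ) :
    ∃ γ : ℝ, 0 < γ ∧ ∀ y ∈ 𝒞, ⟪h, y⟫ < γ → ∃ i : Fin (k + 1), ‖y - v i‖ < δ := by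
  classical
  have hsub : 𝒞 ⊆ C := hC ▸ subset_convexHull ℝ 𝒞
  have key : ∀ y ∈ 𝒞, ⟪h, y⟫ = 0 → ∃ i, y = v i := by
    intro y hy hy0
    have hyC : y ∈ C := hsub hy
    have hyint : y ∉ interior C := by
      intro hint
      rcases Metric.isOpen_iff.mp isOpen_interior y hint with ⟨ε, hε, hball⟩
      have hmem : y - (ε / 2) • h ∈ C := interior_subset (hball (by
        rw [Metric.mem_ball, dist_eq_norm]
        have : y - (ε / 2) • h - y = -((ε / 2) • h) := by abel
        rw [this, norm_neg, norm_smul, Real.norm_eq_abs, abs_of_pos (half_pos hε), hnorm]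
        linarith))
      have h2 := hpos _ hmem
      rw [inner_sub_right, inner_smul_right, hy0, real_inner_self_eq_norm_sq, hnorm] at h2
      nlinarith
    have hyfr : y ∈ frontier C := ⟨subset_closure hyC, hyint⟩
    have hyext : y ∈ Set.extremePoints ℝ C := H1 y hy hyfr
    have hyF : y ∈ F := by rw [hF]; exact ⟨hyC, hy0⟩
    have hvF : y ∈ Set.extremePoints ℝ F := by
      refine ⟨hyF, fun x₁ h₁ x₂ h₂ hseg => hyext.2 (hFface.1 h₁) (hFface.1 h₂) hseg⟩
    rw [hv] at hvF
    obtain ⟨i, hi⟩ := hvF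
    exact ⟨i, hi.symm⟩
  set S : Set (EuclideanSpace ℝ (Fin n)) := 𝒞 ∩ ⋂ i, {y | δ ≤ ‖y - v i‖} with hS
  have hTcl : IsClosed (⋂ i, {y : EuclideanSpace ℝ (Fin n) | δ ≤ ‖y - v i‖}) :=
    isClosed_iInter fun i => isClosed_le continuous_const
      ((continuous_id.sub continuous_const).norm)
  have hScomp : IsCompact S := h𝒞.inter_right hTcl
  have hcont : Continuous fun y : EuclideanSpace ℝ (Fin n) => ⟪h, y⟫ :=
    continuous_const.inner continuous_id
  rcases S.eq_empty_or_nonempty with hSe | hSne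
  · refine ⟨1, one_pos, fun y hy _ => ?_⟩
    by_contra hcon
    push_neg at hcon
    have : y ∈ S := ⟨hy, Set.mem_iInter.mpr fun i => hcon i⟩
    simp [hSe] at this
  · obtain ⟨y₀, hy₀S, hmin⟩ := hScomp.exists_isMinOn hSne hcont.continuousOn
    have hpos0 : 0 < ⟪h, y₀⟫ := by
      rcases (hpos _ (hsub hy₀S.1)).lt_or_eq with hlt | heq
      · exact hlt
      · obtain ⟨i, hi⟩ := key _ hy₀S.1 heq.symm
        have := Set.mem_iInter.mp hy₀S.2 i
        simp [hi] at this
        linarith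
    refine ⟨⟪h, y₀⟫, hpos0, fun y hy hylt => ?_⟩
    by_contra hcon
    push_neg at hcon
    have hyS : y ∈ S := ⟨hy, Set.mem_iInter.mpr fun i => hcon i⟩
    exact absurd (hmin hyS) (not_le.mpr hylt)
end

section
/- Let M ∈ ℝ^{n×k}, B ∈ ℝ^{m×k}, a ∈ ℝ^m, and e = (1,…,1)ᵀ ∈ ℝⁿ. Define P = {Mx : x ∈ ℝᵏ, Bx ≥ a} ⊆ ℝⁿ and the upper image 𝒫̄ = {(y,z) ∈ ℝⁿ × ℝ : ∃x ∈ ℝᵏ, y ≥ Mx, z ≥ −eᵀMx, Bx ≥ a}. Then P = {y ∈ ℝⁿ : ∃z ∈ ℝ, (y,z) ∈ 𝒫̄ and eᵀy + z = 0}. -/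
/-- Let `M ∈ ℝ^{n×k}`, `B ∈ ℝ^{m×k}`, `a ∈ ℝ^m` and let
`P = {Mx : Bx ≥ a}` be the P-represented polyhedron and
`𝒫̄ = {(y,z) : ∃ x, y ≥ Mx, z ≥ -eᵀMx, Bx ≥ a}` the upper image of the associated
multiple objective linear program.  Then `P = {y : ∃ z, (y,z) ∈ 𝒫̄, eᵀy + z = 0}`. -/
theorem p_representation_from_upper_image
    (n k m : ℕ) (M : Matrix (Fin n) (Fin k) ℝ) (B : Matrix (Fin m) (Fin k) ℝ)
    (a : Fin m → ℝ)
    (P : Set (Fin n → ℝ))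
    (hP : P = {y | ∃ x : Fin k → ℝ, y = M.mulVec x ∧ ∀ i, a i ≤ B.mulVec x i})
    (Pbar : Set ((Fin n → ℝ) × ℝ))
    (hPbar : Pbar = {p | ∃ x : Fin k → ℝ, (∀ i, M.mulVec x i ≤ p.1 i) ∧
      -(∑ i, M.mulVec x i) ≤ p.2 ∧ ∀ i, a i ≤ B.mulVec x i}) :
    P = {y | ∃ z : ℝ, (y, z) ∈ Pbar ∧ (∑ i, y i) + z = 0} := by
  subst hP hPbar
  ext y
  simp only [Set.mem_setOf_eq]
  constructor
  · rintro ⟨x, rfl, hx⟩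
    exact ⟨-(∑ i, M.mulVec x i), ⟨x, fun i => le_refl _, le_refl _, hx⟩, by ring⟩
  · rintro ⟨z, ⟨x, hy, hz, hx⟩, hsum⟩
    refine ⟨x, ?_, hx⟩
    have hle : ∑ i, y i ≤ ∑ i, M.mulVec x i := by linarith
    have : ∀ i, y i = M.mulVec x i := by
      intro i
      by_contra h
      have hlt : M.mulVec x i < y i := lt_of_le_of_ne (hy i) (Ne.symm h)
      have : ∑ i, M.mulVec x i < ∑ i, y i :=
        Finset.sum_lt_sum (fun j _ => hy j) ⟨i, Finset.mem_univ i, hlt⟩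
      linarith
    funext i; exact this i
end

section
/- Let h(x,y) be a real polynomial in two variables and consider the Hamiltonian vector field φ = (φ₁, φ₂) with φ₁ = ∂h/∂y and φ₂ = −∂h/∂x. Then φ satisfies the Hárs–Tóth realizability condition (every monomial of φ₁ with negative coefficient is divisible by x, and every monomial of φ₂ with negative coefficient is divisible by y) if and only if h can be written as h(x,y) = xy·a(x,y) − b(x) + c(y) where b and c are polynomials with nonnegative coefficients; equivalently, if and only if the coefficient of xⁱ in h is nonpositive for every i ≥ 1 and the coefficient of yʲ in h is nonnegative for every j ≥ 1. -/
/-!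
Since `∂h/∂y` has coefficient `(j + 1) · [xⁱ yʲ⁺¹] h` at `xⁱ yʲ`, the negative monomials of `φ₁`
not divisible by `x` come exactly from the pure powers `yʲ⁺¹` of `h` with negative coefficient,
and symmetrically for `φ₂`; so realizability is the sign condition on the pure powers of `h`.
Dividing `h` by the monomial `xy` leaves a remainder supported on the two axes; under the sign
condition its positive part lies on the `y`-axis and its negative part on the `x`-axis, which
gives `c` and `b`.
-/

open MvPolynomial Finsupp

def IsMassActionRealizable {σ R : Type*} [CommSemiring R] [LT R] (φ : σ → MvPolynomial σ R) :
    Prop :=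
  ∀ i d, coeff d (φ i) < 0 → 1 ≤ d i

noncomputable def hamiltonianVectorField {R : Type*} [CommRing R] (h : MvPolynomial (Fin 2) R) :
    Fin 2 → MvPolynomial (Fin 2) R :=
  ![pderiv 1 h, -pderiv 0 h]

namespace Finsupp

theorem fin_two_eq_single_of_apply_eq_zero {M : Type*} [Zero M] {i j : Fin 2}
    (hij : i ≠ j) {d : Fin 2 →₀ M} (hd : d i = 0) : d = single j (d j) := by
  ext k
  fin_cases i <;> fin_cases j <;> fin_cases k <;> simp_all

theorem single_add_single_le_iff {d : Fin 2 →₀ ℕ} :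
    single 0 1 + single 1 1 ≤ d ↔ d 0 ≠ 0 ∧ d 1 ≠ 0 := by
  simp [le_def, Fin.forall_fin_two, Nat.one_le_iff_ne_zero]

end Finsupp

namespace MvPolynomial

variable {σ R : Type*}

section CommSemiring

variable [CommSemiring R]

noncomputable def mapCoeffs (f : R → R) (p : MvPolynomial σ R) : MvPolynomial σ R :=
  ∑ d ∈ p.support, monomial d (f (coeff d p))

theorem coeff_mapCoeffs {f : R → R} (hf : f 0 = 0) (p : MvPolynomial σ R) (d : σ →₀ ℕ) :
    coeff d (mapCoeffs f p) = f (coeff d p) := by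
  classical
  simp only [mapCoeffs, coeff_sum, coeff_monomial, Finset.sum_ite_eq', mem_support_iff]
  split_ifs with hd
  · rfl
  · rw [not_not.1 hd, hf]

theorem X_zero_mul_X_one :
    (X 0 * X 1 : MvPolynomial (Fin 2) R) = monomial (single 0 1 + single 1 1) 1 := by
  rw [X, X, monomial_mul, one_mul]

theorem coeff_single_X_zero_mul_X_one_mul (a : MvPolynomial (Fin 2) R)
    (i : Fin 2) (k : ℕ) : coeff (single i k) (X 0 * X 1 * a) = 0 := by
  rw [X_zero_mul_X_one, coeff_monomial_mul', if_neg]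
  rw [single_add_single_le_iff]
  fin_cases i <;> simp

theorem coeff_modMonomial_single_add_single (p : MvPolynomial (Fin 2) R)
    (d : Fin 2 →₀ ℕ) :
    coeff d (p.modMonomial (single 0 1 + single 1 1)) =
      if d 0 ≠ 0 ∧ d 1 ≠ 0 then 0 else coeff d p := by
  split_ifs with hd
  · exact coeff_modMonomial_of_le _ (single_add_single_le_iff.2 hd)
  · exact coeff_modMonomial_of_not_le _ (mt single_add_single_le_iff.1 hd)

end CommSemiring

variable [CommRing R] [LinearOrder R]

theorem mapCoeffs_posPart_sub_mapCoeffs_negPart [IsOrderedRing R] (p : MvPolynomial σ R) :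
    mapCoeffs (·⁺) p - mapCoeffs (·⁻) p = p := by
  ext d
  rw [coeff_sub, coeff_mapCoeffs posPart_zero, coeff_mapCoeffs negPart_zero, posPart_sub_negPart]

variable [IsStrictOrderedRing R]

theorem coeff_pderiv_nonneg_iff (i : σ) (p : MvPolynomial σ R) (d : σ →₀ ℕ) :
    0 ≤ coeff d (pderiv i p) ↔ 0 ≤ coeff (d + single i 1) p := by
  rw [coeff_pderiv, mul_nonneg_iff_of_pos_right (Nat.cast_add_one_pos _)]

theorem forall_coeff_pderiv_neg_imp_iff {i j : Fin 2} (hij : i ≠ j)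
    (p : MvPolynomial (Fin 2) R) :
    (∀ d, coeff d (pderiv j p) < 0 → 1 ≤ d i) ↔ ∀ k, 1 ≤ k → 0 ≤ coeff (single j k) p := by
  calc (∀ d, coeff d (pderiv j p) < 0 → 1 ≤ d i)
      ↔ ∀ d : Fin 2 →₀ ℕ, d i = 0 → 0 ≤ coeff d (pderiv j p) := by
        refine forall_congr' fun d => ?_
        rw [Nat.one_le_iff_ne_zero, ← not_lt]
        tauto
    _ ↔ ∀ k, 0 ≤ coeff (single j k) (pderiv j p) :=
        ⟨fun H k => H _ (single_eq_of_ne hij),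
          fun H d hd => fin_two_eq_single_of_apply_eq_zero hij hd ▸ H _⟩
    _ ↔ ∀ k, 0 ≤ coeff (single j (k + 1)) p := by
        simp only [coeff_pderiv_nonneg_iff, single_add]
    _ ↔ ∀ k, 1 ≤ k → 0 ≤ coeff (single j k) p :=
        ⟨fun H k hk => Nat.succ_pred_eq_of_pos hk ▸ H _, fun H k => H _ k.succ_pos⟩

end MvPolynomial

section

variable {R : Type*} [CommRing R] [LinearOrder R] [IsStrictOrderedRing R]

theorem isMassActionRealizable_hamiltonianVectorField_iff (h : MvPolynomial (Fin 2) R) :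
    IsMassActionRealizable (hamiltonianVectorField h) ↔
      (∀ i, 1 ≤ i → coeff (single 0 i) h ≤ 0) ∧ (∀ j, 1 ≤ j → 0 ≤ coeff (single 1 j) h) := by
  have hφ₁ : hamiltonianVectorField h 0 = pderiv 1 h := rfl
  have hφ₂ : hamiltonianVectorField h 1 = pderiv 0 (-h) := (map_neg _ h).symm
  rw [IsMassActionRealizable, Fin.forall_fin_two, hφ₁, hφ₂, and_comm,
    forall_coeff_pderiv_neg_imp_iff zero_ne_one, forall_coeff_pderiv_neg_imp_iff one_ne_zero]
  simp only [coeff_neg, neg_nonneg]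

theorem coeff_single_signs_of_eq_X_mul_X_mul_sub_add {h a b c : MvPolynomial (Fin 2) R}
    (hb : ∀ d, 0 ≤ coeff d b) (hc : ∀ d, 0 ≤ coeff d c) (hb₁ : ∀ d ∈ b.support, d 1 = 0)
    (hc₀ : ∀ d ∈ c.support, d 0 = 0) (habc : h = X 0 * X 1 * a - b + c) :
    (∀ i, 1 ≤ i → coeff (single 0 i) h ≤ 0) ∧ (∀ j, 1 ≤ j → 0 ≤ coeff (single 1 j) h) := by
  have hcoeff (i : Fin 2) (k : ℕ) :
      coeff (single i k) h = coeff (single i k) c - coeff (single i k) b := by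
    rw [habc, coeff_add, coeff_sub, coeff_single_X_zero_mul_X_one_mul]
    ring
  refine ⟨fun i hi => ?_, fun j hj => ?_⟩
  · have hc0 : coeff (single 0 i) c = 0 :=
      MvPolynomial.notMem_support_iff.1 fun hd => by
        simpa [Nat.one_le_iff_ne_zero.1 hi] using hc₀ _ hd
    linarith [hcoeff 0 i, hb (single 0 i)]
  · have hb0 : coeff (single 1 j) b = 0 :=
      MvPolynomial.notMem_support_iff.1 fun hd => by
        simpa [Nat.one_le_iff_ne_zero.1 hj] using hb₁ _ hd
    linarith [hcoeff 1 j, hc (single 1 j)]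

theorem exists_eq_X_mul_X_mul_sub_add_of_coeff_single_signs {h : MvPolynomial (Fin 2) R}
    (hx : ∀ i, 1 ≤ i → coeff (single 0 i) h ≤ 0) (hy : ∀ j, 1 ≤ j → 0 ≤ coeff (single 1 j) h) :
    ∃ a b c : MvPolynomial (Fin 2) R,
      (∀ d, 0 ≤ coeff d b) ∧ (∀ d, 0 ≤ coeff d c) ∧ (∀ d ∈ b.support, d 1 = 0) ∧
        (∀ d ∈ c.support, d 0 = 0) ∧ h = X 0 * X 1 * a - b + c := by
  set r := h.modMonomial (single 0 1 + single 1 1)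
  have hr₀ (d : Fin 2 →₀ ℕ) (hd : d 0 ≠ 0) : coeff d r ≤ 0 := by
    rw [coeff_modMonomial_single_add_single]
    split_ifs with hd₀₁
    · rfl
    · rw [fin_two_eq_single_of_apply_eq_zero one_ne_zero (by tauto : d 1 = 0)]
      exact hx _ (Nat.one_le_iff_ne_zero.2 hd)
  have hr₁ (d : Fin 2 →₀ ℕ) (hd : d 1 ≠ 0) : 0 ≤ coeff d r := by
    rw [coeff_modMonomial_single_add_single]
    split_ifs with hd₀₁
    · rfl
    · rw [fin_two_eq_single_of_apply_eq_zero zero_ne_one (by tauto : d 0 = 0)]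
      exact hy _ (Nat.one_le_iff_ne_zero.2 hd)
  refine ⟨h.divMonomial (single 0 1 + single 1 1), mapCoeffs (·⁻) r, mapCoeffs (·⁺) r,
    fun d => ?_, fun d => ?_, fun d hd => ?_, fun d hd => ?_, ?_⟩
  · exact coeff_mapCoeffs negPart_zero r d ▸ negPart_nonneg _
  · exact coeff_mapCoeffs posPart_zero r d ▸ posPart_nonneg _
  · rw [MvPolynomial.mem_support_iff, coeff_mapCoeffs negPart_zero, Ne, negPart_eq_zero] at hd
    exact of_not_not fun hd₁ => hd (hr₁ d hd₁)
  · rw [MvPolynomial.mem_support_iff, coeff_mapCoeffs posPart_zero, Ne, posPart_eq_zero] at hd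
    exact of_not_not fun hd₀ => hd (hr₀ d hd₀)
  · have hdiv := divMonomial_add_modMonomial h (single 0 1 + single 1 1)
    rw [← X_zero_mul_X_one] at hdiv
    linear_combination -hdiv - mapCoeffs_posPart_sub_mapCoeffs_negPart r

end

/-- Let `h` be a real polynomial in two variables `x = X 0`, `y = X 1`
and consider the Hamiltonian vector field `φ₁ = ∂h/∂y`, `φ₂ = -∂h/∂x`.  Then `φ`
satisfies the Hárs–Tóth realizability condition (every monomial of `φ₁` with negative
coefficient is divisible by `x`, every monomial of `φ₂` with negative coefficient is
divisible by `y`) if and only if `h = xy·a - b + c` with `b`, `c` polynomials with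
nonnegative coefficients in `x` alone and `y` alone respectively; equivalently, if and
only if the coefficient of `xⁱ` in `h` is nonpositive for all `i ≥ 1` and the coefficient
of `yʲ` is nonnegative for all `j ≥ 1`. -/
theorem hamiltonian_mass_action_realizability
    (h : MvPolynomial (Fin 2) ℝ) :
    (((∀ d : Fin 2 →₀ ℕ, (pderiv (1 : Fin 2) h).coeff d < 0 → 1 ≤ d 0) ∧
      (∀ d : Fin 2 →₀ ℕ, (-(pderiv (0 : Fin 2) h)).coeff d < 0 → 1 ≤ d 1)) ↔
     (∃ a b c : MvPolynomial (Fin 2) ℝ,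
        (∀ d : Fin 2 →₀ ℕ, 0 ≤ b.coeff d) ∧ (∀ d : Fin 2 →₀ ℕ, 0 ≤ c.coeff d) ∧
        (∀ d ∈ b.support, d 1 = 0) ∧ (∀ d ∈ c.support, d 0 = 0) ∧
        h = X 0 * X 1 * a - b + c)) ∧
    (((∀ d : Fin 2 →₀ ℕ, (pderiv (1 : Fin 2) h).coeff d < 0 → 1 ≤ d 0) ∧
      (∀ d : Fin 2 →₀ ℕ, (-(pderiv (0 : Fin 2) h)).coeff d < 0 → 1 ≤ d 1)) ↔
     ((∀ i : ℕ, 1 ≤ i → h.coeff (Finsupp.single 0 i) ≤ 0) ∧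
      (∀ j : ℕ, 1 ≤ j → 0 ≤ h.coeff (Finsupp.single 1 j)))) := by
  have hrealizable := isMassActionRealizable_hamiltonianVectorField_iff h
  rw [IsMassActionRealizable, Fin.forall_fin_two] at hrealizable
  refine ⟨hrealizable.trans ⟨?_, ?_⟩, hrealizable⟩
  · exact fun ⟨hx, hy⟩ => exists_eq_X_mul_X_mul_sub_add_of_coeff_single_signs hx hy
  · exact fun ⟨_, _, _, hb, hc, hb₁, hc₀, habc⟩ =>
      coeff_single_signs_of_eq_X_mul_X_mul_sub_add hb hc hb₁ hc₀ habc
end
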